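/- arXiv:2504.19995 — 2 statements merged into one kernel-verified Lean document; each statement's English description precedes it below -/
import Mathlib

section
/- Let Γ be a group, H ≤ Γ a subgroup, and H' ≤ H a subgroup of finite index in H. If H' is separable in Γ, then H is separable in Γ. -/
/-!
The subgroup `H` is the union of the finitely many left cosets `t • H'` of `H'` it contains.
A left translate of a separable set is separable, and a finite union of separable sets is
separable: a point outside the union is separated from each piece by some finite quotient, and
the product of these finite quotients separates it from all pieces at once.
-/

def SeparableSubgroup {G : Type*} [Group G] (H : Subgroup G) : Prop :=
  ∀ g : G, g ∉ H → ∃ (F : Type) (_ : Group F) (_ : Finite F) (φ : G →* F),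
    φ g ∉ φ '' (H : Set G)

open Set Pointwise

section

variable {G : Type*} [Group G]

/-- The sets closed in the profinite topology of `G`. -/
def SeparableSet (S : Set G) : Prop :=
  ∀ g : G, g ∉ S → ∃ (F : Type) (_ : Group F) (_ : Finite F) (φ : G →* F), φ g ∉ φ '' S

theorem separableSubgroup_iff_separableSet {H : Subgroup G} :
    SeparableSubgroup H ↔ SeparableSet (H : Set G) :=
  Iff.rfl

theorem SeparableSet.smul {S : Set G} (hS : SeparableSet S) (t : G) :
    SeparableSet (t • S) := by
  intro g hg
  obtain ⟨F, _, _, φ, hφ⟩ := hS (t⁻¹ * g) (by rwa [mem_smul_set_iff_inv_smul_mem] at hg)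
  refine ⟨F, inferInstance, inferInstance, φ, ?_⟩
  rintro ⟨_, ⟨s, hs, rfl⟩, hφs⟩
  exact hφ ⟨s, hs, by simp [← hφs]⟩

theorem SeparableSet.iUnion {ι : Type*} [Finite ι] {S : ι → Set G}
    (hS : ∀ i, SeparableSet (S i)) : SeparableSet (⋃ i, S i) := by
  -- reindex by `Fin n` so that the product of the finite quotients lives in `Type`
  obtain ⟨n, ⟨e⟩⟩ := Finite.exists_equiv_fin ι
  intro g hg
  have hg' : ∀ k : Fin n, g ∉ S (e.symm k) := fun k hk => hg (mem_iUnion.2 ⟨_, hk⟩)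
  choose F _ _ φ hφ using fun k => hS _ g (hg' k)
  refine ⟨∀ k, F k, inferInstance, inferInstance, MonoidHom.pi φ, ?_⟩
  rintro ⟨x, hx, hφx⟩
  obtain ⟨i, hi⟩ := mem_iUnion.1 hx
  exact hφ (e i) ⟨x, by simpa using hi, congrFun hφx (e i)⟩

theorem Subgroup.iUnion_out_smul_eq_of_le {H H' : Subgroup G} (hle : H' ≤ H) :
    ⋃ q : H ⧸ H'.subgroupOf H, ((q.out : H) : G) • (H' : Set G) = H := by
  ext x
  simp only [mem_iUnion, SetLike.mem_coe]
  constructor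
  · rintro ⟨q, y, hy, rfl⟩
    exact H.mul_mem q.out.2 (hle hy)
  · intro hx
    obtain ⟨h, hout⟩ := QuotientGroup.mk_out_eq_mul (H'.subgroupOf H) ⟨x, hx⟩
    refine ⟨QuotientGroup.mk ⟨x, hx⟩, (h : G)⁻¹, H'.inv_mem h.2, ?_⟩
    simp [hout]

end

/-- If a finite-index subgroup H' of H is separable in Γ, then so is H. -/
theorem separable_of_finiteIndex_subgroup {Γ : Type*} [Group Γ] (H H' : Subgroup Γ)
    (hle : H' ≤ H) (hfi : H'.relIndex H ≠ 0) (hsep : SeparableSubgroup H') :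
    SeparableSubgroup H := by
  have : (H'.subgroupOf H).FiniteIndex := ⟨hfi⟩
  rw [separableSubgroup_iff_separableSet, ← Subgroup.iUnion_out_smul_eq_of_le hle]
  exact SeparableSet.iUnion fun q => (separableSubgroup_iff_separableSet.1 hsep).smul _
end

section
/- The cyclic subgroup ⟨a⟩ of the Baumslag–Solitar group BS(1,2) = ⟨t, a | t a t⁻¹ = a²⟩ is not separable in BS(1,2). -/
/-- The relator of BS(1,2): t a t⁻¹ a⁻². Generators: `true ↦ t`, `false ↦ a`. -/
def bsRels : Set (FreeGroup Bool) :=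
  {FreeGroup.of true * FreeGroup.of false * (FreeGroup.of true)⁻¹ * ((FreeGroup.of false) ^ 2)⁻¹}

/-- The Baumslag–Solitar group BS(1,2). -/
def BS12 : Type := PresentedGroup bsRels

instance : Group BS12 := by unfold BS12; infer_instance

def bsA : BS12 := PresentedGroup.of false

/-!
An element of finite order conjugate to its `k`-th power has order coprime to `k`, hence is a
power of its `k`-th power. In `BS(1,2)` the element `s = t⁻¹ a t` is conjugate to `a = s ^ 2`, so
every finite quotient sends `s` into the image of `⟨a⟩`. Yet `s ∉ ⟨a⟩`, as the affine action on `ℚ`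
(`t ↦ (2 * ·)`, `a ↦ (1 + ·)`) shows: `s` moves `0` to `1 / 2`, while `a ^ n` moves it to `n`.
-/

theorem coprime_orderOf_of_isConj_pow {G : Type*} [Group G] {x : G} (hx : IsOfFinOrder x)
    {k : ℕ} (h : IsConj x (x ^ k)) : k.Coprime (orderOf x) := by
  obtain ⟨c, hc⟩ := h
  have hord : orderOf x / (orderOf x).gcd k = orderOf x := by
    rw [← hx.orderOf_pow, ← hc.orderOf_eq]
  rw [Nat.div_eq_self] at hord
  exact Nat.coprime_comm.mp (hord.resolve_left hx.orderOf_pos.ne')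

theorem mem_zpowers_pow_of_isConj_pow {G : Type*} [Group G] {x : G} (hx : IsOfFinOrder x)
    {k : ℕ} (h : IsConj x (x ^ k)) : x ∈ Subgroup.zpowers (x ^ k) :=
  mem_zpowers_pow_iff.mpr (coprime_orderOf_of_isConj_pow hx h)

namespace BS12

def t : BS12 := PresentedGroup.of true

theorem t_mul_a_mul_t_inv : t * bsA * t⁻¹ = bsA ^ 2 :=
  mul_inv_eq_one.mp (PresentedGroup.one_of_mem (Set.mem_singleton _))

def sqrtA : BS12 := t⁻¹ * bsA * t

theorem sqrtA_sq : sqrtA ^ 2 = bsA :=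
  calc sqrtA ^ 2 = t⁻¹ * bsA ^ 2 * t := by rw [sqrtA, sq, sq]; group
    _ = bsA := by rw [← t_mul_a_mul_t_inv]; group

theorem isConj_sqrtA_sq : IsConj sqrtA (sqrtA ^ 2) :=
  isConj_iff.mpr ⟨t, by rw [sqrtA_sq, sqrtA]; group⟩

theorem lift_affine_rels_eq_one : ∀ r ∈ bsRels, FreeGroup.lift
    (fun b : Bool ↦ if b then Equiv.mulLeft₀ (2 : ℚ) two_ne_zero else Equiv.addLeft 1) r = 1 := by
  rintro r rfl
  ext x
  simp only [map_mul, FreeGroup.lift_apply_of, ↓reduceIte, Bool.false_eq_true, map_inv, map_pow,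
    Equiv.nsmul_addLeft, nsmul_eq_mul, Nat.cast_ofNat, mul_one, Equiv.neg_addLeft,
    Equiv.Perm.mul_apply, Equiv.coe_addLeft, Equiv.Perm.coe_inv, Equiv.mulLeft₀_symm_apply,
    Equiv.mulLeft₀_apply, Equiv.Perm.coe_one, id_eq]
  ring

def toAffine : BS12 →* Equiv.Perm ℚ := PresentedGroup.toGroup lift_affine_rels_eq_one

theorem toAffine_t : toAffine t = Equiv.mulLeft₀ 2 two_ne_zero :=
  PresentedGroup.toGroup.of lift_affine_rels_eq_one

theorem toAffine_a : toAffine bsA = Equiv.addLeft 1 :=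
  PresentedGroup.toGroup.of lift_affine_rels_eq_one

theorem toAffine_a_zpow_apply (n : ℤ) (x : ℚ) : toAffine (bsA ^ n) x = n + x := by
  simp [map_zpow, toAffine_a]

theorem toAffine_sqrtA_apply (x : ℚ) : toAffine sqrtA x = x + 1 / 2 := by
  simp only [sqrtA, map_mul, map_inv, toAffine_a, toAffine_t, Equiv.Perm.mul_apply,
    Equiv.mulLeft₀_apply, Equiv.coe_addLeft, Equiv.Perm.coe_inv, Equiv.mulLeft₀_symm_apply]
  ring

theorem sqrtA_not_mem_zpowers : sqrtA ∉ Subgroup.zpowers bsA := by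
  rintro ⟨n, hn⟩
  have h : (n : ℚ) + 0 = 0 + 1 / 2 := by
    rw [← toAffine_a_zpow_apply, ← toAffine_sqrtA_apply, ← hn]
  have h2 : 2 * n = 1 := by exact_mod_cast (show (2 * n : ℚ) = 1 by linarith)
  omega

end BS12

/-- The cyclic subgroup ⟨a⟩ of BS(1,2) is not separable. -/
theorem bs_zpowers_a_not_separable :
    ¬ SeparableSubgroup (Subgroup.zpowers bsA) := by
  intro hsep
  obtain ⟨F, _, _, φ, hφ⟩ := hsep _ BS12.sqrtA_not_mem_zpowers
  have hconj : IsConj (φ BS12.sqrtA) (φ BS12.sqrtA ^ 2) := by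
    simpa only [map_pow] using φ.map_isConj BS12.isConj_sqrtA_sq
  have hmem := mem_zpowers_pow_of_isConj_pow (isOfFinOrder_of_finite _) hconj
  rw [← map_pow, BS12.sqrtA_sq, ← MonoidHom.map_zpowers] at hmem
  exact hφ hmem
end
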